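/- Let p be an odd prime and d ≥ 1 an integer with p ∤ d. Let Q: 𝔽_p^{20} → 𝔽_p be the hyperbolic quadratic form Q(x) = x₁x₂ + x₃x₄ + ⋯ + x₁₉x₂₀. Then (p − 1)·#{λ ∈ 𝔽_p^{20} : 1 + 4dQ(λ) ≠ 0 and 1 + 4dQ(λ) is not a square in 𝔽_p} + #{λ ∈ 𝔽_p^{20} : Q(λ) ≠ 0 and d·Q(λ) is not a square in 𝔽_p} = (p − 1)·(p^{10}(p^{10} − 1)/2). -/

import Mathlib

/-!
Pairing even against odd coordinates turns `Q` into the dot product `x ⬝ᵥ y` on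
`𝔽_p¹⁰ × 𝔽_p¹⁰`. For `x ≠ 0` the functional `y ↦ x ⬝ᵥ y` is onto, so all its fibres have `p⁹`
elements, and every nonzero value of `Q` is taken exactly `p⁹(p¹⁰ - 1)` times. Both conditions
say that `u (Q λ)` is a nonsquare for an affine bijection `u` of `𝔽_p` (`a ↦ 1 + 4da`, resp.
`a ↦ da`) with `u 0` a square. As `𝔽_p` has `(p - 1)/2` nonsquares, each set has
`(p - 1)/2 · p⁹(p¹⁰ - 1)` elements, and the identity is arithmetic.
-/

open Finset

section FiberCount

variable {G H : Type*} [AddGroup G] [AddGroup H] [Fintype G] [Fintype H] [DecidableEq H]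

theorem AddMonoidHom.card_mul_card_fiber (f : G →+ H) (hf : Function.Surjective f) (h : H) :
    Fintype.card H * #{g | f g = h} = Fintype.card G := by
  obtain ⟨g₀, rfl⟩ := hf h
  have hfiber : #{g | f g = f g₀} = Nat.card f.ker := by
    rw [← Fintype.card_subtype, ← Nat.card_eq_fintype_card]
    exact Nat.card_congr <| ((Equiv.addRight g₀).subtypeEquiv fun k => by simp).symm
  rw [hfiber, ← Nat.card_eq_fintype_card, ← Nat.card_eq_fintype_card, mul_comm,
    ← f.ker.card_mul_index, AddSubgroup.index_ker, AddMonoidHom.range_eq_top.mpr hf,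
    AddSubgroup.card_top]

theorem AddMonoidHom.card_mul_card_filter_comp (f : G →+ H) (hf : Function.Surjective f)
    (P : H → Prop) [DecidablePred P] :
    Fintype.card H * #{g | P (f g)} = #{h | P h} * Fintype.card G := by
  rw [card_eq_sum_card_fiberwise (f := f) (t := {h | P h}) (fun _ hg => by simpa using hg),
    mul_sum, sum_congr rfl fun h hh => ?_, sum_const, smul_eq_mul]
  rw [filter_filter, ← f.card_mul_card_fiber hf h]
  congr 2
  ext g
  simp only [mem_filter, mem_univ, true_and] at hh ⊢
  exact ⟨And.right, fun hg => ⟨hg ▸ hh, hg⟩⟩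

end FiberCount

section DotProduct

variable {F : Type*} [Field F]

theorem dotProduct_surjective {ι : Type*} [Fintype ι] [DecidableEq ι] {x : ι → F} (hx : x ≠ 0) :
    Function.Surjective (x ⬝ᵥ ·) := by
  obtain ⟨i, hi⟩ := Function.ne_iff.mp hx
  exact fun a => ⟨Pi.single i (a / x i), by simp [dotProduct_single, mul_div_cancel₀ _ hi]⟩

variable [Fintype F] [DecidableEq F]

theorem card_mul_card_filter_dotProduct {n : ℕ} (P : F → Prop) [DecidablePred P] (hP : ¬ P 0) :
    Fintype.card F * #{v : (Fin n → F) × (Fin n → F) | P (v.1 ⬝ᵥ v.2)}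
      = #{a | P a} * (Fintype.card F ^ n * (Fintype.card F ^ n - 1)) := by
  have hrow : ∀ x : Fin n → F, Fintype.card F * #{y | P (x ⬝ᵥ y)}
      = if x = 0 then 0 else #{a | P a} * Fintype.card F ^ n := by
    intro x
    split_ifs with hx
    · simp [hx, hP]
    · have := (AddMonoidHom.mk' (x ⬝ᵥ ·) (dotProduct_add x)).card_mul_card_filter_comp
        (dotProduct_surjective hx) P
      rwa [Fintype.card_fun, Fintype.card_fin] at this
  have hsplit : #{v : (Fin n → F) × (Fin n → F) | P (v.1 ⬝ᵥ v.2)}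
      = ∑ x : Fin n → F, #{y | P (x ⬝ᵥ y)} := by
    simp only [card_filter, Fintype.sum_prod_type]
  rw [hsplit, mul_sum, sum_congr rfl fun x _ => hrow x, sum_ite, sum_const_zero, zero_add,
    sum_const, smul_eq_mul, filter_ne', card_erase_of_mem (mem_univ _), card_univ,
    Fintype.card_fun, Fintype.card_fin]
  ring

end DotProduct

section Nonsquares

variable {F : Type*} [Field F] [Fintype F] [DecidableEq F]

theorem two_mul_card_not_isSquare (hF : ringChar F ≠ 2) :
    2 * #{a : F | ¬IsSquare a} = Fintype.card F - 1 := by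
  have hχ : ∀ a : F, quadraticChar F a
      = 1 - (if a = 0 then 1 else 0) - 2 * (if ¬IsSquare a then 1 else 0) := by
    intro a
    by_cases ha : a = 0
    · simp [ha]
    · by_cases hsq : IsSquare a
      · rw [(quadraticChar_one_iff_isSquare ha).mpr hsq, if_neg ha, if_neg (not_not.mpr hsq)]
        norm_num
      · rw [quadraticChar_neg_one_iff_not_isSquare.mpr hsq, if_neg ha, if_pos hsq]
        norm_num
  have hsum := quadraticChar_sum_zero hF
  simp only [hχ, sum_sub_distrib, ← mul_sum, sum_boole, sum_const, card_univ,
    filter_eq', if_pos (mem_univ _), card_singleton, nsmul_eq_mul, mul_one,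
    Nat.cast_one] at hsum
  omega

theorem card_mul_card_not_isSquare_dotProduct {n : ℕ} (u : F ≃ F) (hu : IsSquare (u 0)) :
    Fintype.card F * #{v : (Fin n → F) × (Fin n → F) | ¬IsSquare (u (v.1 ⬝ᵥ v.2))}
      = #{a : F | ¬IsSquare a} * (Fintype.card F ^ n * (Fintype.card F ^ n - 1)) := by
  rw [card_mul_card_filter_dotProduct (fun a => ¬IsSquare (u a)) (not_not.mpr hu)]
  congr 1
  exact card_equiv u fun a => by simp

end Nonsquares

def evenOddSplit (R : Type*) (n : ℕ) : (Fin (2 * n) → R) ≃ (Fin n → R) × (Fin n → R) where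
  toFun l := (fun j => l ⟨2 * j, by omega⟩, fun j => l ⟨2 * j + 1, by omega⟩)
  invFun v k := if k.val % 2 = 0 then v.1 ⟨k / 2, by omega⟩ else v.2 ⟨k / 2, by omega⟩
  left_inv l := by
    funext k
    dsimp only
    split_ifs <;> exact congrArg l (Fin.ext (by simp only; omega))
  right_inv v := by
    ext j
    · simp only [Nat.mul_mod_right, ↓reduceIte, Nat.mul_div_cancel_left _ two_pos, Fin.eta]
    · have : (2 * j.val + 1) / 2 = j := by omega
      simp [Nat.add_mod, this]

theorem card_mul_natCard_not_isSquare_hyperbolic {F : Type*} [Field F] [Fintype F]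
    [DecidableEq F] {n : ℕ} (Q : (Fin (2 * n) → F) → F)
    (hQ : ∀ x, Q x = ∑ j : Fin n, x ⟨2 * j, by omega⟩ * x ⟨2 * j + 1, by omega⟩)
    (u : F ≃ F) (hu : IsSquare (u 0)) :
    Fintype.card F * Nat.card {l // ¬IsSquare (u (Q l))}
      = #{a : F | ¬IsSquare a} * (Fintype.card F ^ n * (Fintype.card F ^ n - 1)) := by
  rw [← card_mul_card_not_isSquare_dotProduct u hu, Nat.card_eq_fintype_card,
    ← Fintype.card_subtype]
  exact congrArg _ <| Fintype.card_congr <| (evenOddSplit F n).subtypeEquiv fun l => by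
    rw [hQ]; rfl

theorem ne_zero_and_not_exists_eq_sq_iff {M : Type*} [MonoidWithZero M] {b : M} :
    (b ≠ 0 ∧ ¬∃ t, b = t ^ 2) ↔ ¬IsSquare b := by
  rw [isSquare_iff_exists_sq]
  exact ⟨And.right, fun h => ⟨fun hb => h ⟨0, by simp [hb]⟩, h⟩⟩

theorem ne_zero_and_not_exists_mul_eq_sq_iff {M : Type*} [MonoidWithZero M] [NoZeroDivisors M]
    {b c : M} (hc : c ≠ 0) : (b ≠ 0 ∧ ¬∃ t, c * b = t ^ 2) ↔ ¬IsSquare (c * b) := by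
  rw [← mul_ne_zero_iff_left hc, ne_zero_and_not_exists_eq_sq_iff]

/-- Let `p` be an odd prime and `d ≥ 1` with `p ∤ d`, and let `Q` be the
hyperbolic quadratic form on `𝔽_p^{20}`.  Then
`(p−1)·#{λ : 1 + 4dQ(λ) a nonzero nonsquare} + #{λ : Q(λ) ≠ 0 and dQ(λ) a nonsquare}
  = (p−1)·(p¹⁰(p¹⁰−1)/2)`. -/
theorem count_nonsquare_class_lattices (p : ℕ) (hp : p.Prime) (hodd : Odd p)
    (d : ℕ) (hpd : ¬ p ∣ d)
    (Q : (Fin 20 → ZMod p) → ZMod p)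
    (hQ : ∀ x, Q x = ∑ j : Fin 10,
      x ⟨2 * j.val, by have := j.isLt; omega⟩ * x ⟨2 * j.val + 1, by have := j.isLt; omega⟩) :
    (p - 1) * Nat.card {l : Fin 20 → ZMod p //
        1 + 4 * (d : ZMod p) * Q l ≠ 0 ∧ ¬ ∃ t : ZMod p, 1 + 4 * (d : ZMod p) * Q l = t ^ 2}
      + Nat.card {l : Fin 20 → ZMod p //
          Q l ≠ 0 ∧ ¬ ∃ t : ZMod p, (d : ZMod p) * Q l = t ^ 2}
      = (p - 1) * (p ^ 10 * (p ^ 10 - 1) / 2) := by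
  have : Fact p.Prime := ⟨hp⟩
  have hchar : ringChar (ZMod p) ≠ 2 := by
    rw [ZMod.ringChar_zmod_n]
    rintro rfl
    exact (by decide : ¬Odd 2) hodd
  have hd0 : (d : ZMod p) ≠ 0 := by rwa [Ne, ZMod.natCast_eq_zero_iff]
  have h4d : 4 * (d : ZMod p) ≠ 0 := by
    rw [show (4 : ZMod p) = 2 * 2 by norm_num]
    exact mul_ne_zero (mul_ne_zero (Ring.two_ne_zero hchar) (Ring.two_ne_zero hchar)) hd0
  have hcount := card_mul_natCard_not_isSquare_hyperbolic (n := 10) Q hQ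
  have h1 : p * Nat.card {l // ¬IsSquare (1 + 4 * (d : ZMod p) * Q l)} = _ :=
    ZMod.card p ▸ hcount ((Equiv.mulLeft₀ _ h4d).trans (Equiv.addLeft 1)) (by simp)
  have h2 : p * Nat.card {l // ¬IsSquare ((d : ZMod p) * Q l)} = _ :=
    ZMod.card p ▸ hcount (Equiv.mulLeft₀ _ hd0) (by simp)
  have hs : 2 * _ = p - 1 := ZMod.card p ▸ two_mul_card_not_isSquare hchar
  simp only [ne_zero_and_not_exists_eq_sq_iff, ne_zero_and_not_exists_mul_eq_sq_iff hd0]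
  obtain ⟨Y, hY⟩ := Nat.even_mul_pred_self (p ^ 10)
  rw [hY] at h1 h2 ⊢
  rw [← two_mul, Nat.mul_div_cancel_left _ two_pos, ← hs,
    Nat.eq_of_mul_eq_mul_left hp.pos (h1.trans h2.symm)]
  generalize Nat.card _ = N at h2 ⊢
  generalize #{a : ZMod p | ¬IsSquare a} = s at hs h2 ⊢
  have hpN : (2 * s + 1) * N = p * N := by rw [hs, Nat.sub_add_cancel hp.pos]
  linarith
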